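/- arXiv:2505.02876 — 2 statements merged into one kernel-verified Lean document; each statement's English description precedes it below -/
import Mathlib

section
/- Suppose a sequence of MCI upper-bound functions u^{(i)} : ι → ℝ satisfies: (1) pointwise monotone non-increasing in i (u^{(i)}(z) ≥ u^{(j)}(z) for i ≤ j), (2) fixed after selection: if index z_i is selected at step i, then u^{(j)}(z_i) = u^{(i)}(z_i) for all j ≥ i, and (3) the simulated greedy sequence z'₁, ..., z'_K picks at each step j an index maximizing u^{(j)} among unselected indexes, and the two sequences {z_i} (actual greedy) and {z'_j} coincide up to some step s after which no u-value changes and the set {u^{(s)}(z'_s), ..., u^{(s)}(z'_K)} consists of the top remaining values of u^{(s)}. Then for the actual greedy sequence z₁, ..., z_k with k ≤ K, Σ_{i=1}^k u^{(i)}(z_i) ≤ Σ_{j=1}^K u^{(j)}(z'_j). -/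
/-!
Before step `s` the two sequences coincide, and from step `s` on every value is read off the
fixed function `u s`. The remaining actual picks `z s, …, z (k-1)` avoid the common prefix, so
each of them that the simulated run does not also pick was available to it at every step and is
therefore dominated by each of `z' s, …, z' (K-1)`. Since there are at most as many such picks as
simulated picks the actual run misses, and values are nonnegative, the tail sums compare.
-/

open Finset

namespace Finset

variable {α M : Type*} [AddCommMonoid M] [LinearOrder M] [IsOrderedAddMonoid M]

theorem sum_le_sum_of_card_le_of_forall_le {s t : Finset α} {f : α → M} (hcard : #s ≤ #t)
    (hf : ∀ y ∈ t, 0 ≤ f y) (hle : ∀ x ∈ s, ∀ y ∈ t, f x ≤ f y) :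
    ∑ x ∈ s, f x ≤ ∑ y ∈ t, f y := by
  rcases t.eq_empty_or_nonempty with rfl | ht
  · simp [card_eq_zero.1 (Nat.le_zero.1 hcard)]
  obtain ⟨y, hy, hmin⟩ := t.exists_min_image f ht
  calc ∑ x ∈ s, f x ≤ #s • f y := sum_le_card_nsmul _ _ _ fun x hx => hle x hx y hy
    _ ≤ #t • f y := nsmul_le_nsmul_left (hf y hy) hcard
    _ ≤ ∑ y ∈ t, f y := card_nsmul_le_sum _ _ _ hmin

theorem sum_le_sum_of_card_le_of_forall_sdiff_le [DecidableEq α] {s t : Finset α} {f : α → M}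
    (hcard : #s ≤ #t) (hf : ∀ y ∈ t \ s, 0 ≤ f y)
    (hle : ∀ x ∈ s \ t, ∀ y ∈ t \ s, f x ≤ f y) :
    ∑ x ∈ s, f x ≤ ∑ y ∈ t, f y := by
  rw [← sum_inter_add_sum_sdiff s t, ← sum_inter_add_sum_sdiff t s, inter_comm]
  exact add_le_add_right
    (sum_le_sum_of_card_le_of_forall_le (card_sdiff_le_card_sdiff_iff.2 hcard) hf hle) _

end Finset

theorem sum_Ico_le_sum_Ico_of_greedy {ι : Type*} [DecidableEq ι] {k K s : ℕ} {z z' : ℕ → ι}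
    {f : ι → ℝ} (hf : ∀ x, 0 ≤ f x) (hsk : s ≤ k) (hkK : k ≤ K)
    (hz : Set.InjOn z (Set.Iio k)) (hz' : Set.InjOn z' (Set.Ico s K))
    (hagree : ∀ i < s, z i = z' i)
    (hgreedy : ∀ j, s ≤ j → j < K → ∀ x, (∀ i < j, x ≠ z' i) → f x ≤ f (z' j)) :
    ∑ i ∈ Ico s k, f (z i) ≤ ∑ j ∈ Ico s K, f (z' j) := by
  have hzA : Set.InjOn z (Ico s k) := hz.mono fun i hi => (mem_Ico.1 hi).2
  have hzB : Set.InjOn z' (Ico s K) := by rwa [coe_Ico]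
  rw [← sum_image hzA, ← sum_image hzB]
  refine sum_le_sum_of_card_le_of_forall_sdiff_le ?_ (fun y _ => hf y) ?_
  · rw [card_image_of_injOn hzA, card_image_of_injOn hzB, Nat.card_Ico, Nat.card_Ico]
    omega
  intro x hx y hy
  obtain ⟨hxA, hxB⟩ := mem_sdiff.1 hx
  obtain ⟨i, hi, rfl⟩ := mem_image.1 hxA
  obtain ⟨j, hj, rfl⟩ := mem_image.1 (mem_sdiff.1 hy).1
  obtain ⟨hsi, hik⟩ := mem_Ico.1 hi
  obtain ⟨hsj, hjK⟩ := mem_Ico.1 hj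
  refine hgreedy j hsj hjK (z i) fun m hmj hzm => ?_
  rcases lt_or_ge m s with hms | hsm
  · rw [← hagree m hms] at hzm
    have : i = m := hz hik (show m < k by omega) hzm
    omega
  · exact hxB (mem_image.2 ⟨m, mem_Ico.2 ⟨hsm, hmj.trans hjK⟩, hzm.symm⟩)

theorem stmt_10_general {ι : Type*} [DecidableEq ι]
    (k K s : ℕ) (hkK : k ≤ K)
    (z : ℕ → ι) (z' : ℕ → ι)
    (hz : ∀ i j, i < k → j < k → z i = z j → i = j)
    (hz' : ∀ i j, i < K → j < K → z' i = z' j → i = j)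
    (hagree : ∀ i < s, z i = z' i)
    (u : ℕ → ι → ℝ)
    (hnonneg : ∀ i x, 0 ≤ u i x)
    (hstable : ∀ j, s ≤ j → u j = u s)
    (hgreedy : ∀ j, s ≤ j → j < K → ∀ x : ι, (∀ i < j, x ≠ z' i) →
      u s x ≤ u s (z' j)) :
    ∑ i ∈ Finset.range k, u i (z i) ≤ ∑ j ∈ Finset.range K, u j (z' j) := by
  rcases le_or_gt k s with hks | hsk
  · calc ∑ i ∈ range k, u i (z i) = ∑ i ∈ range k, u i (z' i) :=
          sum_congr rfl fun i hi => by rw [hagree i ((mem_range.1 hi).trans_le hks)]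
      _ ≤ ∑ j ∈ range K, u j (z' j) :=
          sum_le_sum_of_subset_of_nonneg (range_subset_range.2 hkK) fun i _ _ => hnonneg i _
  have hstable_on {w : ℕ → ι} {m : ℕ} :
      ∑ i ∈ Ico s m, u i (w i) = ∑ i ∈ Ico s m, u s (w i) :=
    sum_congr rfl fun i hi => by rw [hstable i (mem_Ico.1 hi).1]
  rw [← sum_range_add_sum_Ico _ hsk.le, ← sum_range_add_sum_Ico _ (hsk.le.trans hkK),
    hstable_on, hstable_on]
  refine add_le_add (sum_congr rfl fun i hi => by rw [hagree i (mem_range.1 hi)]).le ?_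
  exact sum_Ico_le_sum_Ico_of_greedy (hnonneg s) hsk.le hkK
    (fun i hi j hj => hz i j hi hj)
    (fun i hi j hj => hz' i j hi.2 hj.2) hagree hgreedy

/-- Comparison of the actual greedy MCI sum with the simulated greedy MCI sum:
under pointwise monotonicity in the step index, the no-update-after-selection
property, agreement of the two sequences before step `s`, no updates from step
`s` on, and the greedy maximality of the simulated sequence from step `s` on,
`Σ_{i<k} u^{(i)}(z_i) ≤ Σ_{j<K} u^{(j)}(z'_j)`. -/
theorem stmt_10 {ι : Type*} [Fintype ι] [DecidableEq ι]
    (k K s : ℕ) (hkK : k ≤ K)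
    (z : ℕ → ι) (z' : ℕ → ι)
    (hz : ∀ i j, i < k → j < k → z i = z j → i = j)
    (hz' : ∀ i j, i < K → j < K → z' i = z' j → i = j)
    (hagree : ∀ i < s, z i = z' i)
    (u : ℕ → ι → ℝ)
    (hnonneg : ∀ i x, 0 ≤ u i x)
    (hmono : ∀ i j, i ≤ j → ∀ x, u j x ≤ u i x)
    (hfix : ∀ i j, i ≤ j → i < k → u j (z i) = u i (z i))
    (hfix' : ∀ i j, i ≤ j → i < K → u j (z' i) = u i (z' i))
    (hstable : ∀ j, s ≤ j → u j = u s)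
    (hgreedy : ∀ j, s ≤ j → j < K → ∀ x : ι, (∀ i < j, x ≠ z' i) →
      u s x ≤ u s (z' j)) :
    ∑ i ∈ Finset.range k, u i (z i) ≤ ∑ j ∈ Finset.range K, u j (z' j) :=
  stmt_10_general k K s hkK z z' hz hz' hagree u hnonneg hstable hgreedy
end

section
/- Let W be a finite workload of queries and c : W × Finset ι → ℝ the per-query what-if cost, each c(q, ·) monotone decreasing. Suppose for each query q and each index z, u(q, z) is an upper bound: c(q, S) - c(q, S ∪ {z}) ≤ u(q, z) for all S with z ∉ S. Let C* = {z₁, ..., z_k} be any configuration with k ≤ K, and let z'₁, ..., z'_K be chosen so that for each j, Σ_{q ∈ W} u(q, z'_j) is among the top-K largest values of z ↦ Σ_{q ∈ W} u(q, z). Then Σ_{q ∈ W} c(q, C*) ≥ Σ_{q ∈ W} c(q, ∅) - Σ_{j=1}^K Σ_{q ∈ W} u(q, z'_j). -/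
/-- Telescoping bound per query. -/
lemma per_query {Q ι : Type*} [DecidableEq ι]
    (c : Q → Finset ι → ℝ) (u : Q → ι → ℝ) (q : Q)
    (hbound : ∀ (S : Finset ι) (z : ι), z ∉ S →
      c q S - c q (insert z S) ≤ u q z)
    (S : Finset ι) : c q ∅ - c q S ≤ ∑ z ∈ S, u q z := by
  induction S using Finset.induction_on with
  | empty => simp
  | @insert z S hz ih =>
    rw [Finset.sum_insert hz]
    have := hbound S z hz
    linarith

/-- Sum comparison: if `A.card ≤ B.card`, `f` nonneg, and every value on `A`
is below every value on `B`, then `∑_A f ≤ ∑_B f`. -/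
lemma sum_le_sum_top {ι : Type*} [DecidableEq ι] (f : ι → ℝ) (A B : Finset ι)
    (hcard : A.card ≤ B.card) (hnn : ∀ b ∈ B, 0 ≤ f b)
    (hle : ∀ a ∈ A, ∀ b ∈ B, f a ≤ f b) : ∑ a ∈ A, f a ≤ ∑ b ∈ B, f b := by
  rcases A.eq_empty_or_nonempty with rfl | hA
  · simpa using Finset.sum_nonneg hnn
  have hB : B.Nonempty := Finset.card_pos.mp (lt_of_lt_of_le (Finset.card_pos.mpr hA) hcard)
  have hinf : ∀ a ∈ A, f a ≤ B.inf' hB f := fun a ha =>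
    Finset.le_inf' hB f (fun b hb => hle a ha b hb)
  calc ∑ a ∈ A, f a ≤ ∑ _a ∈ A, B.inf' hB f := Finset.sum_le_sum hinf
    _ = A.card • B.inf' hB f := by rw [Finset.sum_const]
    _ ≤ B.card • B.inf' hB f := by
        apply nsmul_le_nsmul_left _ hcard
        obtain ⟨b, hb, hbe⟩ := Finset.exists_mem_eq_inf' hB f
        rw [hbe] at *
        exact hnn b hb
    _ = ∑ _b ∈ B, B.inf' hB f := by rw [Finset.sum_const]
    _ ≤ ∑ b ∈ B, f b := Finset.sum_le_sum (fun b hb => Finset.inf'_le f hb)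

/-- Workload-level lower bound: with per-query monotone decreasing costs and MCI
upper bounds `u`, and a top-`K` set `Z'` with respect to the workload-summed `u`,
the workload cost of any configuration of size at most `K` is lower-bounded. -/
theorem stmt_11 {Q ι : Type*} [Fintype ι] [DecidableEq ι] [DecidableEq Q]
    (W : Finset Q) (c : Q → Finset ι → ℝ)
    (hmono : ∀ q ∈ W, ∀ S T : Finset ι, S ⊆ T → c q T ≤ c q S)
    (u : Q → ι → ℝ) (hunonneg : ∀ q ∈ W, ∀ z, 0 ≤ u q z)
    (hbound : ∀ q ∈ W, ∀ (S : Finset ι) (z : ι), z ∉ S →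
      c q S - c q (insert z S) ≤ u q z)
    (K : ℕ) (Cstar : Finset ι) (hC : Cstar.card ≤ K)
    (Z' : Finset ι) (hZcard : Z'.card = K)
    (htop : ∀ z ∈ Z', ∀ z' ∉ Z', (∑ q ∈ W, u q z') ≤ ∑ q ∈ W, u q z) :
    (∑ q ∈ W, c q Cstar) ≥
      (∑ q ∈ W, c q ∅) - ∑ z ∈ Z', ∑ q ∈ W, u q z := by
  set f : ι → ℝ := fun z => ∑ q ∈ W, u q z with hf
  have hfnn : ∀ z, 0 ≤ f z := fun z => Finset.sum_nonneg (fun q hq => hunonneg q hq z)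
  -- step 1: ∑ c q ∅ - ∑ c q Cstar ≤ ∑_{z∈Cstar} f z
  have h1 : (∑ q ∈ W, c q ∅) - (∑ q ∈ W, c q Cstar) ≤ ∑ z ∈ Cstar, f z := by
    rw [← Finset.sum_sub_distrib, hf, Finset.sum_comm]
    exact Finset.sum_le_sum (fun q hq => per_query c u q (hbound q hq) Cstar)
  -- step 2: ∑_{z∈Cstar} f z ≤ ∑_{z∈Z'} f z
  have h2 : ∑ z ∈ Cstar, f z ≤ ∑ z ∈ Z', f z := by
    rw [← Finset.sum_inter_add_sum_sdiff Cstar Z' f,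
        ← Finset.sum_inter_add_sum_sdiff Z' Cstar f, Finset.inter_comm]
    gcongr ?_ + ?_
    · exact le_refl _
    · apply sum_le_sum_top f _ _ _ (fun b _ => hfnn b)
      · intro a ha b hb
        exact htop b (Finset.mem_sdiff.mp hb).1 a (Finset.mem_sdiff.mp ha).2
      · have h3 := Finset.card_inter_add_card_sdiff Cstar Z'
        have h4 := Finset.card_inter_add_card_sdiff Z' Cstar
        rw [Finset.inter_comm] at h4
        omega
  linarith
end
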